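/- arXiv:cs/0702101 — 6 statements merged into one kernel-verified Lean document; each statement's English description precedes it below -/
import Mathlib

section
/- Let E be a real number satisfying Σ_{v∈𝒱} p(v)·min_{u∈𝒰} f(u,v) ≤ E ≤ Σ_{v∈𝒱} Σ_{u∈𝒰} p(v) q(u|v) f(u,v), and assume q(u|v) > 0 for all u ∈ 𝒰, v ∈ 𝒱. Then sup over all vectors (E_v)_{v∈𝒱} ∈ ℋ(E) of Σ_{v∈𝒱} p(v) S_v(E_v) equals S̄(E). -/
open Real Filter Set Finset Topology

namespace ChernoffAux

variable {𝒰 : Type*} [Fintype 𝒰] [Nonempty 𝒰]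

lemma mv_le (fv : 𝒰 → ℝ) (u : 𝒰) : (⨅ u, fv u) ≤ fv u :=
  ciInf_le (Finite.bddBelow_range fv) u

lemma exists_mv (fv : 𝒰 → ℝ) : ∃ u0, fv u0 = ⨅ u, fv u := by
  obtain ⟨u0, hu0⟩ := Finite.exists_min fv
  exact ⟨u0, le_antisymm (le_ciInf hu0) (mv_le fv u0)⟩

/-- weighted Chebyshev / negative correlation inequality -/
lemma cheb {ι : Type*} [Fintype ι] (w x y : ι → ℝ) (hw : ∀ i, 0 ≤ w i)
    (hws : ∑ i, w i = 1) (hxy : ∀ i j, x i ≤ x j → y j ≤ y i) :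
    ∑ i, w i * (x i * y i) ≤ (∑ i, w i * x i) * (∑ i, w i * y i) := by
  have key : (0:ℝ) ≤ ∑ i, ∑ j, w i * w j * ((x i - x j) * (y j - y i)) := by
    refine Finset.sum_nonneg fun i _ => Finset.sum_nonneg fun j _ => ?_
    refine mul_nonneg (mul_nonneg (hw i) (hw j)) ?_
    rcases le_total (x i) (x j) with h | h
    · have := hxy i j h
      nlinarith
    · have := hxy j i h
      nlinarith
  have expand : ∑ i, ∑ j, w i * w j * ((x i - x j) * (y j - y i))
      = (∑ i, w i * x i) * (∑ j, w j * y j) + (∑ i, w i * y i) * (∑ j, w j * x j)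
        - (∑ i, w i * (x i * y i)) * (∑ j, w j) - (∑ i, w i) * (∑ j, w j * (x j * y j)) := by
    rw [Fintype.sum_mul_sum, Fintype.sum_mul_sum, Fintype.sum_mul_sum, Fintype.sum_mul_sum,
      ← Finset.sum_add_distrib, ← Finset.sum_sub_distrib, ← Finset.sum_sub_distrib]
    refine Finset.sum_congr rfl fun i _ => ?_
    rw [← Finset.sum_add_distrib, ← Finset.sum_sub_distrib, ← Finset.sum_sub_distrib]
    exact Finset.sum_congr rfl fun j _ => by ring
  rw [hws] at expand
  nlinarith [key, expand]

variable (fv qv : 𝒰 → ℝ)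

noncomputable def Zf (β : ℝ) : ℝ := ∑ u, qv u * Real.exp (-β * fv u)
noncomputable def Nf (β : ℝ) : ℝ := ∑ u, qv u * fv u * Real.exp (-β * fv u)
noncomputable def Ef (β : ℝ) : ℝ := Nf fv qv β / Zf fv qv β
noncomputable def Qf : ℝ := ∑ u, if fv u = (⨅ u, fv u) then qv u else 0
noncomputable def Zs (β : ℝ) : ℝ := ∑ u, qv u * Real.exp (-β * (fv u - ⨅ u, fv u))
noncomputable def Ns (β : ℝ) : ℝ := ∑ u, qv u * fv u * Real.exp (-β * (fv u - ⨅ u, fv u))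

variable {fv qv}

lemma Zf_pos (hq : ∀ u, 0 < qv u) (β : ℝ) : 0 < Zf fv qv β :=
  Finset.sum_pos (fun u _ => mul_pos (hq u) (exp_pos _)) univ_nonempty

lemma Zf_ge (hq : ∀ u, 0 < qv u) (β : ℝ) (u : 𝒰) :
    qv u * Real.exp (-β * fv u) ≤ Zf fv qv β := by
  rw [Zf]
  exact Finset.single_le_sum (f := fun u => qv u * Real.exp (-β * fv u))
    (fun u _ => le_of_lt (mul_pos (hq u) (exp_pos _))) (mem_univ u)

lemma log_Zf_ge (hq : ∀ u, 0 < qv u) (β : ℝ) {u0 : 𝒰} (hu0 : fv u0 = ⨅ u, fv u) :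
    Real.log (qv u0) - β * (⨅ u, fv u) ≤ Real.log (Zf fv qv β) := by
  have h1 : Real.log (qv u0 * Real.exp (-β * fv u0)) ≤ Real.log (Zf fv qv β) :=
    Real.log_le_log (mul_pos (hq u0) (exp_pos _)) (Zf_ge hq β u0)
  rwa [Real.log_mul (hq u0).ne' (exp_ne_zero _), Real.log_exp, hu0, neg_mul,
    ← sub_eq_add_neg] at h1

lemma Ef_ge (hq : ∀ u, 0 < qv u) (β : ℝ) : (⨅ u, fv u) ≤ Ef fv qv β := by
  rw [Ef, le_div_iff₀ (Zf_pos hq β)]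
  rw [Zf, Finset.mul_sum, Nf]
  refine Finset.sum_le_sum fun u _ => ?_
  have h1 : (0:ℝ) ≤ qv u * Real.exp (-β * fv u) := le_of_lt (mul_pos (hq u) (exp_pos _))
  have h2 := mul_le_mul_of_nonneg_right (mv_le fv u) h1
  nlinarith [h2]

lemma Ef_le (hq : ∀ u, 0 < qv u) (hqs : ∑ u, qv u = 1) {β : ℝ} (hβ : 0 ≤ β) :
    Ef fv qv β ≤ ∑ u, qv u * fv u := by
  rw [Ef, div_le_iff₀ (Zf_pos hq β)]
  have h := cheb qv fv (fun u => Real.exp (-β * fv u)) (fun u => (hq u).le) hqs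
    (fun i j hij => by
      apply Real.exp_le_exp.2
      nlinarith)
  calc Nf fv qv β = ∑ u, qv u * (fv u * Real.exp (-β * fv u)) :=
        Finset.sum_congr rfl fun u _ => by ring
    _ ≤ (∑ u, qv u * fv u) * (∑ u, qv u * Real.exp (-β * fv u)) := h
    _ = (∑ u, qv u * fv u) * Zf fv qv β := rfl

lemma Ef_zero (hqs : ∑ u, qv u = 1) : Ef fv qv 0 = ∑ u, qv u * fv u := by
  rw [Ef, Nf, Zf]
  simp [hqs]

/-- Gibbs variational inequality: the minimizing β for `S` at energy `Ef b` is `b`. -/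
lemma gibbs (hq : ∀ u, 0 < qv u) (hqs : ∑ u, qv u = 1) (b β : ℝ) :
    b * Ef fv qv b + Real.log (Zf fv qv b) ≤ β * Ef fv qv b + Real.log (Zf fv qv β) := by
  set w : 𝒰 → ℝ := fun u => qv u * Real.exp (-b * fv u) / Zf fv qv b with hw
  have hZb := Zf_pos (fv := fv) hq b
  have hwpos : ∀ u, 0 < w u := fun u => div_pos (mul_pos (hq u) (exp_pos _)) hZb
  have hwsum : ∑ u, w u = 1 := by
    rw [hw, ← Finset.sum_div]
    exact div_self hZb.ne'
  set x : 𝒰 → ℝ := fun u => qv u * Real.exp (-β * fv u) / w u with hx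
  have hxpos : ∀ u, 0 < x u := fun u => div_pos (mul_pos (hq u) (exp_pos _)) (hwpos u)
  have hwx : ∀ u, w u * x u = qv u * Real.exp (-β * fv u) := fun u => by
    rw [hx]
    simp only
    rw [mul_comm (w u), div_mul_cancel₀ _ (hwpos u).ne']
  have jensen : ∑ u, w u * Real.log (x u) ≤ Real.log (∑ u, w u * x u) := by
    have := strictConcaveOn_log_Ioi.concaveOn.le_map_sum
      (t := Finset.univ) (w := w) (p := x) (fun u _ => (hwpos u).le) hwsum
      (fun u _ => hxpos u)
    simpa [smul_eq_mul] using this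
  have hsum : (∑ u, w u * x u) = Zf fv qv β := by
    rw [Zf]
    exact Finset.sum_congr rfl fun u _ => hwx u
  have hlogx : ∀ u, Real.log (x u) = (b - β) * fv u + Real.log (Zf fv qv b) := by
    intro u
    rw [hx]
    simp only
    rw [Real.log_div (mul_pos (hq u) (exp_pos _)).ne' (hwpos u).ne', hw]
    simp only
    rw [Real.log_div (mul_pos (hq u) (exp_pos _)).ne' hZb.ne']
    rw [Real.log_mul (hq u).ne' (exp_ne_zero _), Real.log_mul (hq u).ne' (exp_ne_zero _),
      Real.log_exp, Real.log_exp]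
    ring
  have hwf : ∑ u, w u * fv u = Ef fv qv b := by
    rw [Ef, Nf, Finset.sum_div]
    exact Finset.sum_congr rfl fun u _ => by rw [hw]; ring
  have hlhs : ∑ u, w u * Real.log (x u)
      = (b - β) * Ef fv qv b + Real.log (Zf fv qv b) := by
    calc ∑ u, w u * Real.log (x u)
        = ∑ u, ((b - β) * (w u * fv u) + Real.log (Zf fv qv b) * w u) := by
          refine Finset.sum_congr rfl fun u _ => ?_
          rw [hlogx u]; ring
      _ = (b - β) * (∑ u, w u * fv u) + Real.log (Zf fv qv b) * (∑ u, w u) := by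
          rw [Finset.sum_add_distrib, ← Finset.mul_sum, ← Finset.mul_sum]
      _ = (b - β) * Ef fv qv b + Real.log (Zf fv qv b) := by rw [hwf, hwsum, mul_one]
  rw [hlhs, hsum] at jensen
  linarith

lemma Ef_continuous (hq : ∀ u, 0 < qv u) : Continuous (Ef fv qv) := by
  apply Continuous.div
  · exact continuous_finset_sum _ fun u _ => by continuity
  · exact continuous_finset_sum _ fun u _ => by continuity
  · exact fun β => (Zf_pos hq β).ne'

lemma Qf_pos (hq : ∀ u, 0 < qv u) : 0 < Qf fv qv := by
  obtain ⟨u0, hu0⟩ := exists_mv fv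
  rw [Qf]
  refine Finset.sum_pos' (fun u _ => ?_) ⟨u0, mem_univ u0, ?_⟩
  · split_ifs with h
    exacts [(hq u).le, le_rfl]
  · rw [if_pos hu0]; exact hq u0

lemma Zs_eq (β : ℝ) : Zs fv qv β = Zf fv qv β * Real.exp (β * (⨅ u, fv u)) := by
  rw [Zs, Zf, Finset.sum_mul]
  refine Finset.sum_congr rfl fun u _ => ?_
  rw [show -β * (fv u - ⨅ u, fv u) = -β * fv u + β * (⨅ u, fv u) by ring, Real.exp_add]
  ring

lemma Ns_eq (β : ℝ) : Ns fv qv β = Nf fv qv β * Real.exp (β * (⨅ u, fv u)) := by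
  rw [Ns, Nf, Finset.sum_mul]
  refine Finset.sum_congr rfl fun u _ => ?_
  rw [show -β * (fv u - ⨅ u, fv u) = -β * fv u + β * (⨅ u, fv u) by ring, Real.exp_add]
  ring

lemma exp_term_tendsto {c : ℝ} (hc : 0 ≤ c) :
    Tendsto (fun β : ℝ => Real.exp (-β * c)) atTop (𝓝 (if c = 0 then 1 else 0)) := by
  rcases eq_or_lt_of_le hc with h | h
  · simp [← h]
  · rw [if_neg h.ne']
    have h1 : Tendsto (fun β : ℝ => -β * c) atTop atBot := by
      simp only [neg_mul]
      exact tendsto_neg_atBot_iff.2 (tendsto_id.atTop_mul_const h)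
    exact Real.tendsto_exp_atBot.comp h1

lemma tendsto_Zs : Tendsto (Zs fv qv) atTop (𝓝 (Qf fv qv)) := by
  rw [Qf]
  apply tendsto_finset_sum
  intro u _
  have hc : 0 ≤ fv u - ⨅ u, fv u := sub_nonneg.2 (mv_le fv u)
  have h1 := (exp_term_tendsto hc).const_mul (qv u)
  convert h1 using 2
  by_cases h : fv u = ⨅ u, fv u
  · rw [if_pos h, if_pos (by rw [h, sub_self]), mul_one]
  · rw [if_neg h, if_neg (fun hh => h (by linarith [sub_eq_zero.1 hh])), mul_zero]

lemma tendsto_Ns : Tendsto (Ns fv qv) atTop (𝓝 ((⨅ u, fv u) * Qf fv qv)) := by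
  have hlim : ((⨅ u, fv u) * Qf fv qv)
      = ∑ u, (qv u * fv u) * (if fv u - ⨅ u, fv u = 0 then 1 else 0) := by
    rw [Qf, Finset.mul_sum]
    refine Finset.sum_congr rfl fun u _ => ?_
    by_cases h : fv u = ⨅ u, fv u
    · rw [if_pos h, if_pos (by rw [h, sub_self]), mul_one, h]; ring
    · rw [if_neg h, if_neg (fun hh => h (by linarith [sub_eq_zero.1 hh])), mul_zero, mul_zero]
  rw [hlim]
  apply tendsto_finset_sum
  intro u _
  have hc : 0 ≤ fv u - ⨅ u, fv u := sub_nonneg.2 (mv_le fv u)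
  exact (exp_term_tendsto hc).const_mul (qv u * fv u)

lemma Ef_eq_div (hq : ∀ u, 0 < qv u) (β : ℝ) : Ef fv qv β = Ns fv qv β / Zs fv qv β := by
  rw [Ns_eq, Zs_eq, mul_div_mul_right _ _ (exp_ne_zero _), Ef]

lemma tendsto_Ef (hq : ∀ u, 0 < qv u) : Tendsto (Ef fv qv) atTop (𝓝 (⨅ u, fv u)) := by
  have h := (tendsto_Ns (fv := fv) (qv := qv)).div (tendsto_Zs (fv := fv) (qv := qv))
    (Qf_pos hq).ne'
  rw [mul_div_assoc, div_self (Qf_pos hq).ne', mul_one] at h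
  exact h.congr fun β => (Ef_eq_div hq β).symm

/-- the function whose infimum over `β ≥ 0` is `S v (min f)` -/
noncomputable def hfun (fv qv : 𝒰 → ℝ) (β : ℝ) : ℝ := β * (⨅ u, fv u) + Real.log (Zf fv qv β)

lemma hfun_eq (hq : ∀ u, 0 < qv u) (β : ℝ) :
    hfun fv qv β = Real.log (Zs fv qv β) := by
  rw [Zs_eq, Real.log_mul (Zf_pos hq β).ne' (exp_ne_zero _), Real.log_exp, hfun]
  ring

lemma Zs_pos (hq : ∀ u, 0 < qv u) (β : ℝ) : 0 < Zs fv qv β := by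
  rw [Zs_eq]
  exact mul_pos (Zf_pos hq β) (exp_pos _)

lemma hfun_antitone (hq : ∀ u, 0 < qv u) : Antitone (hfun fv qv) := by
  intro a b hab
  rw [hfun_eq hq, hfun_eq hq]
  apply Real.log_le_log (Zs_pos hq b)
  rw [Zs, Zs]
  refine Finset.sum_le_sum fun u _ => ?_
  have hc : 0 ≤ fv u - ⨅ u, fv u := sub_nonneg.2 (mv_le fv u)
  exact mul_le_mul_of_nonneg_left (Real.exp_le_exp.2 (by nlinarith)) (hq u).le

lemma tendsto_hfun (hq : ∀ u, 0 < qv u) :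
    Tendsto (hfun fv qv) atTop (𝓝 (Real.log (Qf fv qv))) := by
  have h := (Real.continuousAt_log (Qf_pos hq).ne').tendsto.comp
    (tendsto_Zs (fv := fv) (qv := qv))
  exact h.congr fun β => (hfun_eq hq β).symm

lemma hfun_ge (hq : ∀ u, 0 < qv u) (β : ℝ) :
    Real.log (Qf fv qv) ≤ hfun fv qv β :=
  (hfun_antitone hq).le_of_tendsto (tendsto_hfun hq) β

end ChernoffAux

open ChernoffAux in
/-- Theorem 1 of the paper, the isothermal-equilibrium identity.
Let `𝒰`, `𝒱` be finite nonempty sets, `f : 𝒰 × 𝒱 → ℝ`, `p` a pmf on `𝒱`, and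
`q(·|v)` a pmf on `𝒰` for each `v`, with `q(u|v) > 0` everywhere.  With
`Z_v(β) = ∑_u q(u|v) e^{-β f(u,v)}`, `S_v(E) = inf_{β ≥ 0} [βE + ln Z_v(β)]`,
`S̄(E) = inf_{β ≥ 0} [βE + ∑_v p(v) ln Z_v(β)]`, and `ℋ(E)` the set of vectors
`(E_v)` with `min_u f(u,v) ≤ E_v ≤ ∑_u q(u|v) f(u,v)` and `∑_v p(v) E_v ≤ E`,
if `∑_v p(v) min_u f(u,v) ≤ E ≤ ∑_v ∑_u p(v) q(u|v) f(u,v)`, then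
`sup_{(E_v) ∈ ℋ(E)} ∑_v p(v) S_v(E_v) = S̄(E)`. -/
theorem chernoff_identity
    {𝒰 𝒱 : Type*} [Fintype 𝒰] [Nonempty 𝒰] [Fintype 𝒱] [Nonempty 𝒱]
    (f : 𝒰 → 𝒱 → ℝ) (p : 𝒱 → ℝ) (q : 𝒱 → 𝒰 → ℝ)
    (hp : ∀ v, 0 ≤ p v) (hps : ∑ v, p v = 1)
    (hq : ∀ v u, 0 < q v u) (hqs : ∀ v, ∑ u, q v u = 1)
    (Z : 𝒱 → ℝ → ℝ)
    (hZ : ∀ v β, Z v β = ∑ u, q v u * Real.exp (-β * f u v))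
    (S : 𝒱 → ℝ → ℝ)
    (hS : ∀ v e, S v e = sInf {x | ∃ β : ℝ, 0 ≤ β ∧ x = β * e + Real.log (Z v β)})
    (Sbar : ℝ → ℝ)
    (hSbar : ∀ e, Sbar e =
      sInf {x | ∃ β : ℝ, 0 ≤ β ∧ x = β * e + ∑ v, p v * Real.log (Z v β)})
    (E : ℝ)
    (hE1 : ∑ v, p v * (⨅ u, f u v) ≤ E)
    (hE2 : E ≤ ∑ v, ∑ u, p v * q v u * f u v) :
    sSup {x | ∃ Ev : 𝒱 → ℝ,
        (∀ v, (⨅ u, f u v) ≤ Ev v ∧ Ev v ≤ ∑ u, q v u * f u v) ∧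
        (∑ v, p v * Ev v ≤ E) ∧
        x = ∑ v, p v * S v (Ev v)} = Sbar E := by

  classical
  have hZeq : ∀ v β, Z v β = Zf (fun u => f u v) (q v) β := fun v β => by
    rw [hZ]; rfl
  obtain ⟨u0, hu0⟩ : ∃ u0 : 𝒱 → 𝒰, ∀ v, f (u0 v) v = ⨅ u, f u v := by
    choose u0 h using fun v => exists_mv (fun u => f u v)
    exact ⟨u0, h⟩
  -- lower bounds for the inf-sets
  have hSbdd : ∀ (v : 𝒱) (e : ℝ), (⨅ u, f u v) ≤ e →
      Real.log (q v (u0 v)) ∈ lowerBounds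
        {x | ∃ β : ℝ, 0 ≤ β ∧ x = β * e + Real.log (Z v β)} := by
    rintro v e he y ⟨β, hβ, rfl⟩
    have h1 := log_Zf_ge (fv := fun u => f u v) (qv := q v) (hq v) β (hu0 v)
    rw [← hZeq] at h1
    nlinarith [mul_nonneg hβ (sub_nonneg.2 he)]
  have hSle : ∀ (v : 𝒱) (e : ℝ), (⨅ u, f u v) ≤ e → ∀ β : ℝ, 0 ≤ β →
      S v e ≤ β * e + Real.log (Z v β) := by
    intro v e he β hβ
    rw [hS]
    exact csInf_le ⟨_, hSbdd v e he⟩ ⟨β, hβ, rfl⟩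
  have hSbarbdd : (∑ v, p v * Real.log (q v (u0 v))) ∈ lowerBounds
      {x | ∃ β : ℝ, 0 ≤ β ∧ x = β * E + ∑ v, p v * Real.log (Z v β)} := by
    rintro y ⟨β, hβ, rfl⟩
    have h1 : ∑ v, p v * Real.log (q v (u0 v))
        ≤ ∑ v, p v * (Real.log (Z v β) + β * (⨅ u, f u v)) := by
      refine Finset.sum_le_sum fun v _ => mul_le_mul_of_nonneg_left ?_ (hp v)
      have h2 := log_Zf_ge (fv := fun u => f u v) (qv := q v) (hq v) β (hu0 v)
      rw [← hZeq] at h2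
      linarith
    have h3 : ∑ v, p v * (Real.log (Z v β) + β * (⨅ u, f u v))
        = (∑ v, p v * Real.log (Z v β)) + β * ∑ v, p v * (⨅ u, f u v) := by
      rw [Finset.mul_sum, ← Finset.sum_add_distrib]
      exact Finset.sum_congr rfl fun v _ => by ring
    have h4 : β * (∑ v, p v * (⨅ u, f u v)) ≤ β * E := mul_le_mul_of_nonneg_left hE1 hβ
    linarith
  have hSbarle : ∀ β : ℝ, 0 ≤ β →
      Sbar E ≤ β * E + ∑ v, p v * Real.log (Z v β) := by
    intro β hβ
    rw [hSbar]
    exact csInf_le ⟨_, hSbarbdd⟩ ⟨β, hβ, rfl⟩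
  -- the general upper bound
  have key_ub : ∀ x ∈ {x | ∃ Ev : 𝒱 → ℝ,
      (∀ v, (⨅ u, f u v) ≤ Ev v ∧ Ev v ≤ ∑ u, q v u * f u v) ∧
      (∑ v, p v * Ev v ≤ E) ∧
      x = ∑ v, p v * S v (Ev v)}, x ≤ Sbar E := by
    rintro x ⟨Ev, hmem, hsum, rfl⟩
    rw [hSbar]
    refine le_csInf ⟨0 * E + ∑ v, p v * Real.log (Z v 0), 0, le_rfl, rfl⟩ ?_
    rintro y ⟨β, hβ, rfl⟩
    calc ∑ v, p v * S v (Ev v)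
        ≤ ∑ v, p v * (β * Ev v + Real.log (Z v β)) :=
          Finset.sum_le_sum fun v _ =>
            mul_le_mul_of_nonneg_left (hSle v (Ev v) (hmem v).1 β hβ) (hp v)
      _ = β * (∑ v, p v * Ev v) + ∑ v, p v * Real.log (Z v β) := by
          rw [Finset.mul_sum, ← Finset.sum_add_distrib]
          exact Finset.sum_congr rfl fun v _ => by ring
      _ ≤ β * E + ∑ v, p v * Real.log (Z v β) := by
          have := mul_le_mul_of_nonneg_left hsum hβ
          linarith
  -- existence of a maximizing witness
  have hwit : ∃ x ∈ {x | ∃ Ev : 𝒱 → ℝ,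
      (∀ v, (⨅ u, f u v) ≤ Ev v ∧ Ev v ≤ ∑ u, q v u * f u v) ∧
      (∑ v, p v * Ev v ≤ E) ∧
      x = ∑ v, p v * S v (Ev v)}, Sbar E ≤ x := by
    set M : ℝ → ℝ := fun β => ∑ v, p v * Ef (fun u => f u v) (q v) β with hM
    by_cases hcase : ∃ b, 0 ≤ b ∧ M b ≤ E
    · -- Case 1 : interior temperature, intermediate value theorem
      obtain ⟨b1, hb1, hMb1⟩ := hcase
      have hM0 : E ≤ M 0 := by
        refine le_trans hE2 (le_of_eq ?_)
        refine Finset.sum_congr rfl fun v _ => ?_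
        rw [Ef_zero (hqs v), Finset.mul_sum]
        exact Finset.sum_congr rfl fun u _ => mul_assoc _ _ _
      have hcont : ContinuousOn M (Set.Icc 0 b1) :=
        (continuous_finset_sum _ fun v _ =>
          continuous_const.mul (Ef_continuous (hq v))).continuousOn
      obtain ⟨b, hbmem, hMb⟩ := intermediate_value_Icc' hb1 hcont
        (Set.mem_Icc.2 ⟨hMb1, hM0⟩)
      have hb0 : 0 ≤ b := hbmem.1
      refine ⟨∑ v, p v * S v (Ef (fun u => f u v) (q v) b),
        ⟨fun v => Ef (fun u => f u v) (q v) b,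
          fun v => ⟨Ef_ge (hq v) b, Ef_le (hq v) (hqs v) hb0⟩,
          le_of_eq hMb, rfl⟩, ?_⟩
      calc Sbar E ≤ b * E + ∑ v, p v * Real.log (Z v b) := hSbarle b hb0
        _ = ∑ v, p v * (b * Ef (fun u => f u v) (q v) b + Real.log (Z v b)) := by
            rw [← hMb, hM]
            simp only
            rw [Finset.mul_sum, ← Finset.sum_add_distrib]
            exact Finset.sum_congr rfl fun v _ => by ring
        _ ≤ ∑ v, p v * S v (Ef (fun u => f u v) (q v) b) := by
            refine Finset.sum_le_sum fun v _ => mul_le_mul_of_nonneg_left ?_ (hp v)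
            rw [hS]
            refine le_csInf ⟨0 * _ + Real.log (Z v 0), 0, le_rfl, rfl⟩ ?_
            rintro y ⟨β, hβ, rfl⟩
            have := gibbs (fv := fun u => f u v) (qv := q v) (hq v) (hqs v) b β
            rw [← hZeq, ← hZeq] at this
            exact this
    · -- Case 2 : ground-state regime
      push_neg at hcase
      have hlimM : Filter.Tendsto M Filter.atTop (nhds (∑ v, p v * (⨅ u, f u v))) :=
        tendsto_finset_sum _ fun v _ => ((tendsto_Ef (hq v)).const_mul (p v))
      have hEle : E ≤ ∑ v, p v * (⨅ u, f u v) :=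
        ge_of_tendsto hlimM (Filter.eventually_atTop.2 ⟨0, fun b hb => (hcase b hb).le⟩)
      have hEeq : E = ∑ v, p v * (⨅ u, f u v) := le_antisymm hEle hE1
      -- value of S at the minimum energy
      have hSm : ∀ v, S v (⨅ u, f u v) = Real.log (Qf (fun u => f u v) (q v)) := by
        intro v
        rw [hS]
        apply le_antisymm
        · refine ge_of_tendsto (tendsto_hfun (fv := fun u => f u v) (qv := q v) (hq v)) ?_
          filter_upwards [Filter.eventually_ge_atTop 0] with β hβ
          refine csInf_le ⟨_, hSbdd v _ le_rfl⟩ ⟨β, hβ, ?_⟩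
          rw [hfun, hZeq]
        · refine le_csInf ⟨0 * _ + Real.log (Z v 0), 0, le_rfl, rfl⟩ ?_
          rintro y ⟨β, hβ, rfl⟩
          have := hfun_ge (fv := fun u => f u v) (qv := q v) (hq v) β
          rw [hfun, ← hZeq] at this
          exact this
      refine ⟨∑ v, p v * S v (⨅ u, f u v),
        ⟨fun v => ⨅ u, f u v,
          fun v => ⟨le_rfl, ?_⟩, le_of_eq hEeq.symm, rfl⟩, ?_⟩
      · have h1 := Ef_ge (fv := fun u => f u v) (qv := q v) (hq v) 0
        rwa [Ef_zero (hqs v)] at h1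
      · have hfuneq : ∀ β : ℝ, β * E + ∑ v, p v * Real.log (Z v β)
            = ∑ v, p v * hfun (fun u => f u v) (q v) β := by
          intro β
          rw [hEeq, Finset.mul_sum, ← Finset.sum_add_distrib]
          refine Finset.sum_congr rfl fun v _ => ?_
          rw [hfun, hZeq]
          ring
        have hlim2 : Filter.Tendsto (fun β => β * E + ∑ v, p v * Real.log (Z v β))
            Filter.atTop (nhds (∑ v, p v * Real.log (Qf (fun u => f u v) (q v)))) := by
          have := tendsto_finset_sum (Finset.univ (α := 𝒱))
            (fun v _ => ((tendsto_hfun (fv := fun u => f u v) (qv := q v) (hq v)).const_mul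
              (p v)))
          exact this.congr fun β => (hfuneq β).symm
        have h2 : Sbar E ≤ ∑ v, p v * Real.log (Qf (fun u => f u v) (q v)) :=
          ge_of_tendsto hlim2 (by
            filter_upwards [Filter.eventually_ge_atTop 0] with β hβ
            exact hSbarle β hβ)
        refine le_trans h2 (le_of_eq ?_)
        exact Finset.sum_congr rfl fun v _ => by rw [hSm v]
  obtain ⟨x, hxmem, hxge⟩ := hwit
  have hxeq : x = Sbar E := le_antisymm (key_ub x hxmem) hxge
  have hmem : Sbar E ∈ {x | ∃ Ev : 𝒱 → ℝ,
      (∀ v, (⨅ u, f u v) ≤ Ev v ∧ Ev v ≤ ∑ u, q v u * f u v) ∧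
      (∑ v, p v * Ev v ≤ E) ∧
      x = ∑ v, p v * S v (Ev v)} := hxeq ▸ hxmem
  exact le_antisymm (csSup_le ⟨_, hmem⟩ key_ub) (le_csSup ⟨Sbar E, key_ub⟩ hmem)
end

section
/- Fix v ∈ 𝒱 and assume q(u|v) > 0 for all u ∈ 𝒰. If E_v is a real number with min_{u∈𝒰} f(u,v) < E_v ≤ Σ_{u∈𝒰} q(u|v) f(u,v), then there exists β* ≥ 0 such that −(d/dβ) ln Z_v(β) evaluated at β = β* equals E_v, and the infimum defining S_v(E_v) is attained at β*: S_v(E_v) = β* E_v + ln Z_v(β*). -/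
open Filter Topology


/-- Fix `v` with `q(u|v) > 0` for all `u`.  If
`min_u f(u,v) < E_v ≤ ∑_u q(u|v) f(u,v)`, then there is `β* ≥ 0` with
`-(d/dβ) ln Z_v(β)|_{β=β*} = E_v` and the infimum defining `S_v(E_v)` is
attained at `β*`: `S_v(E_v) = β* E_v + ln Z_v(β*)`. -/
theorem single_subsystem_attained
    {𝒰 𝒱 : Type*} [Fintype 𝒰] [Nonempty 𝒰] [Fintype 𝒱] [Nonempty 𝒱]
    (f : 𝒰 → 𝒱 → ℝ) (q : 𝒱 → 𝒰 → ℝ) (v : 𝒱)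
    (hq : ∀ u, 0 < q v u) (hqs : ∑ u, q v u = 1)
    (Z : 𝒱 → ℝ → ℝ)
    (hZ : ∀ β, Z v β = ∑ u, q v u * Real.exp (-β * f u v))
    (S : 𝒱 → ℝ → ℝ)
    (hS : ∀ e, S v e = sInf {x | ∃ β : ℝ, 0 ≤ β ∧ x = β * e + Real.log (Z v β)})
    (Ev : ℝ)
    (hEv1 : (⨅ u, f u v) < Ev) (hEv2 : Ev ≤ ∑ u, q v u * f u v) :
    ∃ βstar : ℝ, 0 ≤ βstar ∧
      HasDerivAt (fun β => Real.log (Z v β)) (-Ev) βstar ∧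
      S v Ev = βstar * Ev + Real.log (Z v βstar) := by
  classical
  set F : ℝ → ℝ := fun β => ∑ u, q v u * Real.exp (-β * f u v) with hF
  have hFpos : ∀ β, 0 < F β := by
    intro β
    exact Finset.sum_pos (fun u _ => mul_pos (hq u) (Real.exp_pos _)) Finset.univ_nonempty
  set D : ℝ → ℝ := fun β => ∑ u, q v u * (Real.exp (-β * f u v) * -(f u v)) with hD
  have hFderiv : ∀ β, HasDerivAt F (D β) β := by
    intro β
    apply HasDerivAt.fun_sum
    intro u _
    have h1 : HasDerivAt (fun x : ℝ => -x * f u v) (-(f u v)) β := by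
      simpa using ((hasDerivAt_id β).neg.mul_const (f u v))
    exact (h1.exp).const_mul (q v u)
  set g : ℝ → ℝ := fun β => β * Ev + Real.log (F β) with hg
  have hgderiv : ∀ β, HasDerivAt g (Ev + D β / F β) β := by
    intro β
    have := ((hasDerivAt_id β).mul_const Ev).add ((hFderiv β).log (hFpos β).ne')
    exact this.congr_deriv (by simp)
  -- minimizer of f
  obtain ⟨u0, hu0⟩ := Finite.exists_min (fun u => f u v)
  have hmin : (⨅ u, f u v) = f u0 v :=
    le_antisymm (ciInf_le (Set.Finite.bddBelow (Set.finite_range _)) u0) (le_ciInf hu0)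
  have hEm : f u0 v < Ev := hmin ▸ hEv1
  have hEmpos : 0 < Ev - f u0 v := by linarith
  -- F 0 = 1, g 0 = 0
  have hF0 : F 0 = 1 := by
    simp only [hF, neg_zero, zero_mul, Real.exp_zero, mul_one]
    exact hqs
  have hg0 : g 0 = 0 := by
    simp [hg, hF0]
  -- lower bound on g
  have hglb : ∀ β : ℝ, β * (Ev - f u0 v) + Real.log (q v u0) ≤ g β := by
    intro β
    have h1 : q v u0 * Real.exp (-β * f u0 v) ≤ F β :=
      Finset.single_le_sum (f := fun u => q v u * Real.exp (-β * f u v))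
        (fun u _ => le_of_lt (mul_pos (hq u) (Real.exp_pos _))) (Finset.mem_univ u0)
    have h2 : Real.log (q v u0 * Real.exp (-β * f u0 v)) ≤ Real.log (F β) :=
      Real.log_le_log (mul_pos (hq u0) (Real.exp_pos _)) h1
    rw [Real.log_mul (ne_of_gt (hq u0)) (Real.exp_ne_zero _), Real.log_exp] at h2
    have heq : β * (Ev - f u0 v) + Real.log (q v u0)
        = β * Ev + (Real.log (q v u0) + -β * f u0 v) := by ring
    rw [heq, hg]
    exact add_le_add (le_refl _) h2
  set M : ℝ := max 1 ((1 - Real.log (q v u0)) / (Ev - f u0 v)) with hM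
  have hM0 : (0:ℝ) ≤ M := le_trans zero_le_one (le_max_left _ _)
  have hgM : ∀ β : ℝ, M ≤ β → 1 ≤ g β := by
    intro β hβ
    have h1 : (1 - Real.log (q v u0)) / (Ev - f u0 v) ≤ β :=
      le_trans (le_max_right _ _) hβ
    have h2 : 1 - Real.log (q v u0) ≤ β * (Ev - f u0 v) := by
      rwa [div_le_iff₀ hEmpos] at h1
    have := hglb β
    linarith
  -- continuity of g
  have hFcont : Continuous F := by
    apply continuous_finset_sum
    intro u _
    exact continuous_const.mul (Real.continuous_exp.comp
      ((continuous_id.neg).mul continuous_const))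
  have hgcont : Continuous g :=
    (continuous_id.mul continuous_const).add (hFcont.log (fun x => (hFpos x).ne'))
  -- minimum on [0, M]
  obtain ⟨βs, hβsmem, hβsmin⟩ := isCompact_Icc.exists_isMinOn
    (Set.nonempty_Icc.mpr hM0) hgcont.continuousOn
  have hβs0 : 0 ≤ βs := hβsmem.1
  have hglobal : ∀ β : ℝ, 0 ≤ β → g βs ≤ g β := by
    intro β hβ
    by_cases hβM : β ≤ M
    · exact hβsmin ⟨hβ, hβM⟩
    · have h1 : 1 ≤ g β := hgM β (le_of_not_ge hβM)
      have h2 : g βs ≤ g 0 := hβsmin ⟨le_refl 0, hM0⟩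
      rw [hg0] at h2
      linarith
  -- key derivative identity
  have hkey : Ev + D βs / F βs = 0 := by
    rcases eq_or_lt_of_le hβs0 with h0 | hpos
    · -- βs = 0
      have hD0 : D 0 = -∑ u, q v u * f u v := by
        simp only [hD, neg_zero, zero_mul, Real.exp_zero, one_mul]
        rw [← Finset.sum_neg_distrib]
        congr 1; funext u; ring
      have hle : Ev + D 0 / F 0 ≤ 0 := by
        rw [hD0, hF0]
        simp only [div_one]
        linarith
      have hge : 0 ≤ Ev + D 0 / F 0 := by
        have hd := (hgderiv 0).hasDerivWithinAt (s := Set.Ioi (0:ℝ))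
        rw [hasDerivWithinAt_iff_tendsto_slope] at hd
        have hdiff : Set.Ioi (0:ℝ) \ {0} = Set.Ioi 0 := by
          apply Set.diff_singleton_eq_self; simp
        rw [hdiff] at hd
        haveI : (nhdsWithin (0:ℝ) (Set.Ioi 0)).NeBot := nhdsGT_neBot 0
        refine ge_of_tendsto hd ?_
        filter_upwards [self_mem_nhdsWithin] with t ht
        have ht0 : (0:ℝ) < t := ht
        have hgt : g 0 ≤ g t := h0 ▸ hglobal t (le_of_lt ht0)
        rw [slope_def_field]
        apply div_nonneg <;> linarith
      rw [← h0]
      linarith [hle, hge]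
    · have hloc : IsLocalMin g βs := by
        apply IsMinOn.isLocalMin (s := Set.Ici (0:ℝ))
        · intro x hx
          exact hglobal x hx
        · exact Filter.mem_of_superset (Ioi_mem_nhds hpos) Set.Ioi_subset_Ici_self
      exact hloc.hasDerivAt_eq_zero (hgderiv βs)
  -- conclude
  have hlogderiv : HasDerivAt (fun β => Real.log (Z v β)) (-Ev) βs := by
    have heq : (fun β => Real.log (Z v β)) = fun β => Real.log (F β) := by
      funext β; rw [hZ]
    rw [heq]
    have := (hFderiv βs).log (hFpos βs).ne'
    have hDF : D βs / F βs = -Ev := by linarith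
    rwa [hDF] at this
  refine ⟨βs, hβs0, hlogderiv, ?_⟩
  have hSet : {x | ∃ β : ℝ, 0 ≤ β ∧ x = β * Ev + Real.log (Z v β)}
      = {x | ∃ β : ℝ, 0 ≤ β ∧ x = g β} := by
    ext x
    simp only [Set.mem_setOf_eq, hg, hZ, hF]
  have hgoal : S v Ev = g βs := by
    rw [hS, hSet]
    apply le_antisymm
    · exact csInf_le ⟨g βs, fun x ⟨β, hβ, hx⟩ => hx ▸ hglobal β hβ⟩ ⟨βs, hβs0, rfl⟩
    · exact le_csInf ⟨g βs, βs, hβs0, rfl⟩ (fun x ⟨β, hβ, hx⟩ => hx ▸ hglobal β hβ)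
  rw [hgoal, hg, hZ]
end

section
/- Fix reals θ > 0, A > 0, and x with |x| < A. For β > 0 let D(β) = −(d/dβ) ln ∫_{−A}^{A} e^{−β|x̂ − x|^θ} dx̂ (this derivative exists for every β > 0). Then lim_{β→∞} β · D(β) = 1/θ. -/
/-!
Substituting `t = β^{1/θ} (y - x)` turns the partition function into
`Z(β) = β^{-1/θ} G(β^{1/θ})` with `G(s) = ∫_{s(-A-x)}^{s(A-x)} e^{-|t|^θ} dt`, so
`β D(β) = -β (log Z)'(β) = (1 - s G'(s) / G(s)) / θ` at `s = β^{1/θ}`. Since `x` is interior, both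
endpoints of `G` run off to `±∞`: `G(s)` increases to a positive limit while `s G'(s)` is a
boundary term of size `s e^{-c s^θ}`, so the correction vanishes.
-/

open Filter Topology Set

noncomputable def stretchedExp (θ t : ℝ) : ℝ := Real.exp (-|t| ^ θ)

section StretchedExp

variable {θ : ℝ}

lemma stretchedExp_pos (θ t : ℝ) : 0 < stretchedExp θ t := Real.exp_pos _

lemma continuous_stretchedExp (hθ : 0 ≤ θ) : Continuous (stretchedExp θ) :=
  Real.continuous_exp.comp ((continuous_abs.rpow_const fun _ => Or.inr hθ).neg)

lemma stretchedExp_mul {c : ℝ} (hc : 0 ≤ c) (u : ℝ) :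
    stretchedExp θ (c * u) = Real.exp (-(c ^ θ * |u| ^ θ)) := by
  rw [stretchedExp, abs_mul, abs_of_nonneg hc, Real.mul_rpow hc (abs_nonneg u)]

lemma tendsto_mul_mul_stretchedExp_atTop (hθ : 0 < θ) (r : ℝ) :
    Tendsto (fun s => s * (r * stretchedExp θ (s * r))) atTop (𝓝 0) := by
  rcases eq_or_ne r 0 with rfl | hr
  · simp
  have hdecay := (tendsto_rpow_mul_exp_neg_mul_atTop_nhds_zero (1 / θ) (|r| ^ θ)
    (Real.rpow_pos_of_pos (abs_pos.mpr hr) θ)).comp (tendsto_rpow_atTop hθ)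
  rw [← mul_zero r]
  refine (hdecay.const_mul r).congr' ?_
  filter_upwards [eventually_gt_atTop 0] with s hs
  rw [Function.comp_apply, ← Real.rpow_mul hs.le, mul_one_div_cancel hθ.ne', Real.rpow_one,
    stretchedExp_mul hs.le, neg_mul, mul_comm (|r| ^ θ)]
  ring

end StretchedExp

noncomputable def stretchedExpIntegral (θ l r s : ℝ) : ℝ := ∫ t in s * l..s * r, stretchedExp θ t

section StretchedExpIntegral

variable {θ l r : ℝ}

lemma hasDerivAt_stretchedExpIntegral (hθ : 0 ≤ θ) (s : ℝ) :
    HasDerivAt (stretchedExpIntegral θ l r)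
      (r * stretchedExp θ (s * r) - l * stretchedExp θ (s * l)) s := by
  have hcont := continuous_stretchedExp hθ
  set Φ : ℝ → ℝ := fun u => ∫ t in (0 : ℝ)..u, stretchedExp θ t
  have hΦ (u : ℝ) : HasDerivAt Φ (stretchedExp θ u) u :=
    (hcont.integral_hasStrictDerivAt 0 u).hasDerivAt
  have hsplit : stretchedExpIntegral θ l r = fun s => Φ (s * r) - Φ (s * l) := by
    funext s
    exact (intervalIntegral.integral_interval_sub_left (hcont.intervalIntegrable _ _)
      (hcont.intervalIntegrable _ _)).symm
  rw [hsplit]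
  have h := ((hΦ (s * r)).comp s ((hasDerivAt_id s).mul_const r)).sub
    ((hΦ (s * l)).comp s ((hasDerivAt_id s).mul_const l))
  exact h.congr_deriv (by ring)

lemma stretchedExpIntegral_pos (hθ : 0 ≤ θ) (hlr : l < r) {s : ℝ} (hs : 0 < s) :
    0 < stretchedExpIntegral θ l r s :=
  intervalIntegral.intervalIntegral_pos_of_pos_on
    ((continuous_stretchedExp hθ).intervalIntegrable _ _) (fun t _ => stretchedExp_pos θ t)
    (mul_lt_mul_of_pos_left hlr hs)

lemma monotoneOn_stretchedExpIntegral (hθ : 0 ≤ θ) (hl : l ≤ 0) (hr : 0 ≤ r) :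
    MonotoneOn (stretchedExpIntegral θ l r) (Ici 0) := by
  intro s hs t _ hst
  exact intervalIntegral.integral_mono_interval (mul_le_mul_of_nonpos_right hst hl)
    (mul_le_mul_of_nonneg_left (hl.trans hr) hs) (mul_le_mul_of_nonneg_right hst hr)
    (Eventually.of_forall fun u => (stretchedExp_pos θ u).le)
    ((continuous_stretchedExp hθ).intervalIntegrable _ _)

lemma tendsto_mul_deriv_div_stretchedExpIntegral_atTop (hθ : 0 < θ) (hl : l < 0) (hr : 0 < r) :
    Tendsto (fun s => s * deriv (stretchedExpIntegral θ l r) s / stretchedExpIntegral θ l r s)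
      atTop (𝓝 0) := by
  have hderiv (s : ℝ) : deriv (stretchedExpIntegral θ l r) s =
      r * stretchedExp θ (s * r) - l * stretchedExp θ (s * l) :=
    (hasDerivAt_stretchedExpIntegral hθ.le s).deriv
  have hnum : Tendsto (fun s => s * deriv (stretchedExpIntegral θ l r) s) atTop (𝓝 0) := by
    simpa [hderiv, mul_sub] using (tendsto_mul_mul_stretchedExp_atTop hθ r).sub
      (tendsto_mul_mul_stretchedExp_atTop hθ l)
  have hnum_nonneg {s : ℝ} (hs : 0 ≤ s) : 0 ≤ s * deriv (stretchedExpIntegral θ l r) s := by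
    have := mul_pos hr (stretchedExp_pos θ (s * r))
    have := mul_neg_of_neg_of_pos hl (stretchedExp_pos θ (s * l))
    exact mul_nonneg hs (by rw [hderiv]; linarith)
  have hG1 := stretchedExpIntegral_pos hθ.le (hl.trans hr) one_pos
  refine tendsto_of_tendsto_of_tendsto_of_le_of_le' tendsto_const_nhds
    (by simpa using hnum.div_const (stretchedExpIntegral θ l r 1)) ?_ ?_
  · filter_upwards [eventually_gt_atTop 0] with s hs
    exact div_nonneg (hnum_nonneg hs.le) (stretchedExpIntegral_pos hθ.le (hl.trans hr) hs).le
  · filter_upwards [eventually_ge_atTop 1] with s hs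
    exact div_le_div_of_nonneg_left (hnum_nonneg (zero_le_one.trans hs)) hG1
      (monotoneOn_stretchedExpIntegral hθ.le hl.le hr.le (mem_Ici.mpr zero_le_one)
        (mem_Ici.mpr (zero_le_one.trans hs)) hs)

end StretchedExpIntegral

lemma integral_exp_neg_mul_rpow_abs_sub {θ β : ℝ} (hθ : θ ≠ 0) (hβ : 0 < β) (a b x : ℝ) :
    ∫ y in a..b, Real.exp (-β * |y - x| ^ θ) =
      (β ^ (1 / θ))⁻¹ * stretchedExpIntegral θ (a - x) (b - x) (β ^ (1 / θ)) := by
  have hc := Real.rpow_pos_of_pos hβ (1 / θ)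
  have hcθ : (β ^ (1 / θ)) ^ θ = β := by
    rw [← Real.rpow_mul hβ.le, one_div_mul_cancel hθ, Real.rpow_one]
  have hscale (u : ℝ) : Real.exp (-β * |u| ^ θ) = stretchedExp θ (β ^ (1 / θ) * u) := by
    rw [stretchedExp_mul hc.le, hcθ, neg_mul]
  rw [intervalIntegral.integral_comp_sub_right (fun u => Real.exp (-β * |u| ^ θ)) x]
  simp only [hscale]
  rw [intervalIntegral.integral_comp_mul_left _ hc.ne', smul_eq_mul, stretchedExpIntegral]

lemma hasDerivAt_log_integral_exp_neg_mul_rpow_abs_sub {θ β a b : ℝ} (hθ : 0 < θ) (hab : a < b)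
    (hβ : 0 < β) (x : ℝ) :
    HasDerivAt (fun γ : ℝ => Real.log (∫ y in a..b, Real.exp (-γ * |y - x| ^ θ)))
      (-(1 - β ^ (1 / θ) * deriv (stretchedExpIntegral θ (a - x) (b - x)) (β ^ (1 / θ)) /
        stretchedExpIntegral θ (a - x) (b - x) (β ^ (1 / θ))) / (θ * β)) β := by
  have hGpos {γ : ℝ} (hγ : 0 < γ) :
      0 < stretchedExpIntegral θ (a - x) (b - x) (γ ^ (1 / θ)) :=
    stretchedExpIntegral_pos hθ.le (by linarith) (Real.rpow_pos_of_pos hγ _)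
  have hG := (hasDerivAt_stretchedExpIntegral (l := a - x) (r := b - x) hθ.le
    (β ^ (1 / θ))).comp β (Real.hasDerivAt_rpow_const (p := 1 / θ) (Or.inl hβ.ne'))
  have hlog := ((Real.hasDerivAt_log hβ.ne').const_mul (-(1 / θ))).add (hG.log (hGpos hβ).ne')
  refine (hlog.congr_of_eventuallyEq ?_).congr_deriv ?_
  · filter_upwards [eventually_gt_nhds hβ] with γ hγ
    rw [integral_exp_neg_mul_rpow_abs_sub hθ.ne' hγ, Real.log_mul
      (inv_ne_zero (Real.rpow_pos_of_pos hγ _).ne') (hGpos hγ).ne', Real.log_inv,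
      Real.log_rpow hγ]
    simp only [Pi.add_apply, Function.comp_apply]
    ring
  · rw [Real.rpow_sub_one hβ.ne', Function.comp_apply,
      (hasDerivAt_stretchedExpIntegral hθ.le (β ^ (1 / θ))).deriv]
    field_simp
    ring

theorem finite_interval_equipartition_limit_general
    (θ A x : ℝ) (hθ : 0 < θ) (hx : |x| < A)
    (D : ℝ → ℝ)
    (hD : ∀ β : ℝ, 0 < β →
      HasDerivAt (fun b : ℝ => Real.log (∫ y in (-A)..A, Real.exp (-b * |y - x| ^ θ)))
        (-D β) β) :
    (∀ β : ℝ, 0 < β →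
      DifferentiableAt ℝ
        (fun b : ℝ => Real.log (∫ y in (-A)..A, Real.exp (-b * |y - x| ^ θ))) β) ∧
    Tendsto (fun β => β * D β) atTop (nhds (1 / θ)) := by
  refine ⟨fun β hβ => (hD β hβ).differentiableAt, ?_⟩
  obtain ⟨hxA, hxA'⟩ := abs_lt.mp hx
  have hratio := (tendsto_mul_deriv_div_stretchedExpIntegral_atTop hθ (l := -A - x) (r := A - x)
    (by linarith) (by linarith)).comp (tendsto_rpow_atTop (one_div_pos.mpr hθ))
  have hlim := (hratio.const_sub 1).div_const θ
  rw [sub_zero] at hlim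
  refine hlim.congr' ?_
  filter_upwards [eventually_gt_atTop 0] with β hβ
  have hDβ := (hD β hβ).unique
    (hasDerivAt_log_integral_exp_neg_mul_rpow_abs_sub hθ (by linarith) hβ x)
  rw [neg_div, neg_inj] at hDβ
  rw [hDβ, Function.comp_apply]
  field_simp

/-- equipartition is exact to first order on a finite
interval.  Fix `θ > 0`, `A > 0` and `|x| < A`.  For `β > 0` the function
`β ↦ ln ∫_{-A}^{A} e^{-β|x̂-x|^θ} dx̂` is differentiable, and if `D(β)` denotes
its negated derivative (the average distortion at inverse temperature `β`),
then `β·D(β) → 1/θ` as `β → ∞`. -/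
theorem finite_interval_equipartition_limit
    (θ A x : ℝ) (hθ : 0 < θ) (hA : 0 < A) (hx : |x| < A)
    (D : ℝ → ℝ)
    (hD : ∀ β : ℝ, 0 < β →
      HasDerivAt (fun b : ℝ => Real.log (∫ y in (-A)..A, Real.exp (-b * |y - x| ^ θ)))
        (-D β) β) :
    (∀ β : ℝ, 0 < β →
      DifferentiableAt ℝ
        (fun b : ℝ => Real.log (∫ y in (-A)..A, Real.exp (-b * |y - x| ^ θ))) β) ∧
    Tendsto (fun β => β * D β) atTop (nhds (1 / θ)) :=
  finite_interval_equipartition_limit_general θ A x hθ hx D hD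
end

section
/- Let 𝒳 and 𝒴 be finite nonempty sets, q a probability mass function on 𝒳 with q(x) > 0 for all x, and W(y|x) > 0 conditional probabilities (Σ_y W(y|x) = 1 for each x). Let p(y) = Σ_x q(x) W(y|x), H(Y|X) = −Σ_{x,y} q(x) W(y|x) ln W(y|x), and H(Y) = −Σ_y p(y) ln p(y). Define g(β) = β·H(Y|X) + Σ_y p(y) ln( Σ_x q(x) W(y|x)^β ) for β ≥ 0. Then g(β) ≥ g(1) for every β ≥ 0, and g(1) = H(Y|X) − H(Y). Consequently −inf_{β≥0} g(β) = H(Y) − H(Y|X), the mutual information I(X;Y) in nats. -/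
/-- channel capacity as a Chernoff-bound rate function.
With `p(y) = ∑_x q(x) W(y|x)`, `H(Y|X)`, `H(Y)` and
`g(β) = β H(Y|X) + ∑_y p(y) ln(∑_x q(x) W(y|x)^β)`, one has `g(β) ≥ g(1)` for
every `β ≥ 0`, `g(1) = H(Y|X) - H(Y)`, and hence
`-inf_{β≥0} g(β) = H(Y) - H(Y|X) = I(X;Y)` (in nats). -/
theorem capacity_chernoff
    {𝒳 𝒴 : Type*} [Fintype 𝒳] [Nonempty 𝒳] [Fintype 𝒴] [Nonempty 𝒴]
    (q : 𝒳 → ℝ) (W : 𝒳 → 𝒴 → ℝ)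
    (hq : ∀ x, 0 < q x) (hqs : ∑ x, q x = 1)
    (hW : ∀ x y, 0 < W x y) (hWs : ∀ x, ∑ y, W x y = 1)
    (p : 𝒴 → ℝ) (hp : ∀ y, p y = ∑ x, q x * W x y)
    (HYX : ℝ) (hHYX : HYX = -∑ x, ∑ y, q x * W x y * Real.log (W x y))
    (HY : ℝ) (hHY : HY = -∑ y, p y * Real.log (p y))
    (g : ℝ → ℝ)
    (hg : ∀ β, g β = β * HYX + ∑ y, p y * Real.log (∑ x, q x * W x y ^ β)) :
    (∀ β : ℝ, 0 ≤ β → g 1 ≤ g β) ∧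
    g 1 = HYX - HY ∧
    -sInf {z | ∃ β : ℝ, 0 ≤ β ∧ z = g β} = HY - HYX := by
  have hppos : ∀ y, 0 < p y := by
    intro y
    rw [hp]
    exact Finset.sum_pos (fun x _ => mul_pos (hq x) (hW x y)) Finset.univ_nonempty
  -- g 1 = HYX - HY
  have hg1 : g 1 = HYX - HY := by
    rw [hg, hHY]
    have : ∀ y : 𝒴, (∑ x, q x * W x y ^ (1 : ℝ)) = p y := by
      intro y
      rw [hp]
      exact Finset.sum_congr rfl fun x _ => by rw [Real.rpow_one]
    simp only [this]
    ring
  -- per-y Jensen inequality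
  have key : ∀ (β : ℝ) (y : 𝒴),
      p y * Real.log (p y) + (β - 1) * ∑ x, q x * W x y * Real.log (W x y)
        ≤ p y * Real.log (∑ x, q x * W x y ^ β) := by
    intro β y
    have hpy := hppos y
    have hμsum : ∑ x, q x * W x y / p y = 1 := by
      rw [← Finset.sum_div, ← hp, div_self hpy.ne']
    have hjensen := (strictConcaveOn_log_Ioi.concaveOn).le_map_sum
      (t := Finset.univ) (w := fun x => q x * W x y / p y)
      (p := fun x => W x y ^ (β - 1))
      (fun x _ => div_nonneg (mul_pos (hq x) (hW x y)).le hpy.le) hμsum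
      (fun x _ => Set.mem_Ioi.mpr (Real.rpow_pos_of_pos (hW x y) _))
    simp only [smul_eq_mul] at hjensen
    have hsum_eq : (∑ x, q x * W x y / p y * W x y ^ (β - 1))
        = (∑ x, q x * W x y ^ β) / p y := by
      rw [Finset.sum_div]
      refine Finset.sum_congr rfl fun x _ => ?_
      have hW1 : W x y ^ (β - 1) * W x y = W x y ^ β := by
        rw [Real.rpow_sub (hW x y), Real.rpow_one, div_mul_cancel₀ _ (hW x y).ne']
      rw [← hW1]
      ring
    have hlog_eq : ∀ x : 𝒳, Real.log (W x y ^ (β - 1)) = (β - 1) * Real.log (W x y) :=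
      fun x => Real.log_rpow (hW x y) _
    simp only [hlog_eq, hsum_eq] at hjensen
    have hspos : 0 < ∑ x, q x * W x y ^ β :=
      Finset.sum_pos (fun x _ => mul_pos (hq x) (Real.rpow_pos_of_pos (hW x y) _))
        Finset.univ_nonempty
    rw [Real.log_div hspos.ne' hpy.ne'] at hjensen
    have hjensen' : ∑ x, q x * W x y / p y * ((β - 1) * Real.log (W x y))
        = (β - 1) * (∑ x, q x * W x y * Real.log (W x y)) / p y := by
      rw [Finset.mul_sum, Finset.sum_div]
      refine Finset.sum_congr rfl fun x _ => ?_
      ring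
    rw [hjensen'] at hjensen
    have := mul_le_mul_of_nonneg_left hjensen hpy.le
    calc p y * Real.log (p y) + (β - 1) * ∑ x, q x * W x y * Real.log (W x y)
        = p y * ((β - 1) * (∑ x, q x * W x y * Real.log (W x y)) / p y)
          + p y * Real.log (p y) := by field_simp; ring
      _ ≤ p y * (Real.log (∑ x, q x * W x y ^ β) - Real.log (p y))
          + p y * Real.log (p y) := by linarith
      _ = p y * Real.log (∑ x, q x * W x y ^ β) := by ring
  -- main inequality
  have hmain : ∀ β : ℝ, g 1 ≤ g β := by
    intro β
    have hsum := Finset.sum_le_sum (fun y (_ : y ∈ Finset.univ) => key β y)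
    have hS : ∑ y : 𝒴, ∑ x, q x * W x y * Real.log (W x y) = -HYX := by
      rw [hHYX, neg_neg, Finset.sum_comm]
    rw [hg1, hg, hHY]
    have hsum' : ∑ y, (p y * Real.log (p y)
          + (β - 1) * ∑ x, q x * W x y * Real.log (W x y))
        = (∑ y, p y * Real.log (p y)) + (β - 1) * (-HYX) := by
      rw [Finset.sum_add_distrib, ← Finset.mul_sum, hS]
    rw [hsum'] at hsum
    nlinarith [hsum]
  refine ⟨fun β _ => hmain β, hg1, ?_⟩
  have hmem : g 1 ∈ {z | ∃ β : ℝ, 0 ≤ β ∧ z = g β} := ⟨1, by norm_num⟩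
  have hlb : ∀ z ∈ {z | ∃ β : ℝ, 0 ≤ β ∧ z = g β}, g 1 ≤ z := by
    rintro z ⟨β, _, rfl⟩
    exact hmain β
  have : sInf {z | ∃ β : ℝ, 0 ≤ β ∧ z = g β} = g 1 :=
    le_antisymm (csInf_le ⟨g 1, hlb⟩ hmem) (le_csInf ⟨g 1, hmem⟩ hlb)
  rw [this, hg1]
  ring
end

section
/- Let 𝒳 and 𝒴 be finite nonempty sets, p a probability mass function on 𝒳, and ℰ : 𝒳 × 𝒴 → ℝ. Define ζ_x(β) = Σ_{y∈𝒴} e^{−β ℰ(x,y)}, h(β) = Σ_x p(x) ln ζ_x(β), and Σ̄(E) = inf_{β≥0} [βE + h(β)]. Let β₂ ≥ 0 and set E₂ = −h'(β₂) = Σ_x p(x) (Σ_y ℰ(x,y) e^{−β₂ℰ(x,y)}) / ζ_x(β₂). Then for every real E₀ ≤ E₂: inf_{β≥0} [ βE₀ + Σ_x p(x) ln( ζ_x(β + β₂)/ζ_x(β₂) ) ] = Σ̄(E₀) − Σ̄(E₂) + β₂(E₂ − E₀). In particular Σ̄(E₂) = β₂E₂ + h(β₂), i.e., the infimum defining Σ̄(E₂)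 is attained at β₂. -/
open Finset

-- per-x Jensen inequality
lemma perx {𝒴 : Type*} [Fintype 𝒴] [Nonempty 𝒴] (En : 𝒴 → ℝ) (β β₂ : ℝ) :
    Real.log (∑ y, Real.exp (-β₂ * En y)) +
      (β₂ - β) * ((∑ y, En y * Real.exp (-β₂ * En y)) / (∑ y, Real.exp (-β₂ * En y)))
      ≤ Real.log (∑ y, Real.exp (-β * En y)) := by
  set Z : ℝ := ∑ y, Real.exp (-β₂ * En y) with hZdef
  have hZ : 0 < Z := Finset.sum_pos (fun y _ => Real.exp_pos _) Finset.univ_nonempty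
  set Zb : ℝ := ∑ y, Real.exp (-β * En y) with hZbdef
  have hZb : 0 < Zb := Finset.sum_pos (fun y _ => Real.exp_pos _) Finset.univ_nonempty
  set w : 𝒴 → ℝ := fun y => Real.exp (-β₂ * En y) / Z with hw
  have hw0 : ∀ y ∈ Finset.univ (α := 𝒴), 0 ≤ w y := fun y _ =>
    div_nonneg (Real.exp_pos _).le hZ.le
  have hw1 : ∑ y, w y = 1 := by
    rw [hw]; rw [← Finset.sum_div]; exact div_self hZ.ne'
  have jensen := convexOn_exp.map_sum_le (t := Finset.univ) (p := fun y => (β₂ - β) * En y)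
    hw0 hw1 (fun y _ => Set.mem_univ _)
  simp only [smul_eq_mul] at jensen
  have hsum1 : ∑ y, w y * ((β₂ - β) * En y)
      = (β₂ - β) * ((∑ y, En y * Real.exp (-β₂ * En y)) / Z) := by
    have e1 : ∀ y : 𝒴, w y * ((β₂ - β) * En y)
        = (β₂ - β) * (En y * Real.exp (-β₂ * En y)) / Z := fun y => by
      rw [hw]; ring
    rw [Finset.sum_congr rfl (fun y _ => e1 y), ← Finset.sum_div, ← Finset.mul_sum,
      mul_div_assoc]
  have hsum2 : ∑ y, w y * Real.exp ((β₂ - β) * En y) = Zb / Z := by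
    have e2 : ∀ y : 𝒴, w y * Real.exp ((β₂ - β) * En y) = Real.exp (-β * En y) / Z :=
      fun y => by
        rw [hw, div_mul_eq_mul_div, ← Real.exp_add]
        congr 2; ring
    rw [Finset.sum_congr rfl (fun y _ => e2 y), ← Finset.sum_div]
  rw [hsum1, hsum2] at jensen
  have h2 : Z * Real.exp ((β₂ - β) * ((∑ y, En y * Real.exp (-β₂ * En y)) / Z)) ≤ Zb := by
    rw [mul_comm]
    exact (le_div_iff₀ hZ).mp jensen
  have := Real.log_le_log (by positivity) h2
  rwa [Real.log_mul hZ.ne' (Real.exp_pos _).ne', Real.log_exp] at this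

-- iInf shift lemma
lemma iInf_coe_add_const {ι : Type*} [Nonempty ι] (f : ι → ℝ) (r : ℝ) :
    (⨅ i, ((f i + r : ℝ) : EReal)) = (⨅ i, ((f i : ℝ) : EReal)) + (r : EReal) := by
  have key : ∀ (g : ι → ℝ) (s : ℝ),
      (⨅ i, ((g i : ℝ) : EReal)) + (s : EReal) ≤ ⨅ i, ((g i + s : ℝ) : EReal) := by
    intro g s
    refine le_iInf fun i => ?_
    rw [EReal.coe_add]
    exact add_le_add_left (iInf_le _ i) _
  refine le_antisymm ?_ (key f r)
  have h2 := key (fun i => f i + r) (-r)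
  simp only [add_neg_cancel_right] at h2
  have h3 := add_le_add_left h2 (r : EReal)
  calc (⨅ i, ((f i + r : ℝ) : EReal))
      = (⨅ i, ((f i + r : ℝ) : EReal)) + ((-r : ℝ) : EReal) + ((r : ℝ) : EReal) := by
        rw [add_assoc, ← EReal.coe_add, neg_add_cancel, EReal.coe_zero, add_zero]
    _ ≤ (⨅ i, ((f i : ℝ) : EReal)) + (r : EReal) := h3

/-- hypothesis-testing error exponent via thermodynamic
entropy.  With `ζ_x(β) = ∑_y e^{-βℰ(x,y)}`, `h(β) = ∑_x p(x) ln ζ_x(β)`,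
`Σ̄(E) = inf_{β≥0}[βE + h(β)]` (infimum in the extended reals), `β₂ ≥ 0` and
`E₂ = -h'(β₂) = ∑_x p(x)(∑_y ℰ(x,y)e^{-β₂ℰ(x,y)})/ζ_x(β₂)`, for every real
`E₀ ≤ E₂`:
`inf_{β≥0}[βE₀ + ∑_x p(x) ln(ζ_x(β+β₂)/ζ_x(β₂))] = Σ̄(E₀) - Σ̄(E₂) + β₂(E₂-E₀)`;
in particular `Σ̄(E₂) = β₂E₂ + h(β₂)`. -/
theorem tilted_exponent_identity
    {𝒳 𝒴 : Type*} [Fintype 𝒳] [Nonempty 𝒳] [Fintype 𝒴] [Nonempty 𝒴]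
    (p : 𝒳 → ℝ) (hp : ∀ x, 0 ≤ p x) (hps : ∑ x, p x = 1)
    (En : 𝒳 → 𝒴 → ℝ)
    (ζ : 𝒳 → ℝ → ℝ)
    (hζ : ∀ x β, ζ x β = ∑ y, Real.exp (-β * En x y))
    (h : ℝ → ℝ) (hh : ∀ β, h β = ∑ x, p x * Real.log (ζ x β))
    (Sigbar : ℝ → EReal)
    (hSigbar : ∀ e, Sigbar e =
      ⨅ β : {b : ℝ // 0 ≤ b}, ((β.1 * e + h β.1 : ℝ) : EReal))
    (β₂ : ℝ) (hβ₂ : 0 ≤ β₂)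
    (E₂ : ℝ)
    (hE₂ : E₂ = ∑ x, p x * ((∑ y, En x y * Real.exp (-β₂ * En x y)) / ζ x β₂)) :
    (∀ E₀ : ℝ, E₀ ≤ E₂ →
      (⨅ β : {b : ℝ // 0 ≤ b},
        ((β.1 * E₀ + ∑ x, p x * Real.log (ζ x (β.1 + β₂) / ζ x β₂) : ℝ) : EReal))
      = Sigbar E₀ - Sigbar E₂ + ((β₂ * (E₂ - E₀) : ℝ) : EReal)) ∧
    Sigbar E₂ = ((β₂ * E₂ + h β₂ : ℝ) : EReal) := by
  have hζpos : ∀ x β, 0 < ζ x β := by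
    intro x β; rw [hζ]
    exact Finset.sum_pos (fun y _ => Real.exp_pos _) Finset.univ_nonempty
  -- key inequality: h β₂ + (β₂ - β) * E₂ ≤ h β for all β
  have key : ∀ β : ℝ, h β₂ + (β₂ - β) * E₂ ≤ h β := by
    intro β
    rw [hh, hh, hE₂, Finset.mul_sum, ← Finset.sum_add_distrib]
    refine Finset.sum_le_sum fun x _ => ?_
    have hx := perx (En x) β β₂
    rw [← hζ x β₂, ← hζ x β] at hx
    calc p x * Real.log (ζ x β₂) + (β₂ - β) * (p x * ((∑ y, En x y * Real.exp (-β₂ * En x y)) / ζ x β₂))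
        = p x * (Real.log (ζ x β₂) + (β₂ - β) * ((∑ y, En x y * Real.exp (-β₂ * En x y)) / ζ x β₂)) := by ring
      _ ≤ p x * Real.log (ζ x β) := mul_le_mul_of_nonneg_left hx (hp x)
  -- second part
  have part2 : Sigbar E₂ = ((β₂ * E₂ + h β₂ : ℝ) : EReal) := by
    rw [hSigbar]
    refine le_antisymm (iInf_le _ (⟨β₂, hβ₂⟩ : {b : ℝ // 0 ≤ b})) (le_iInf fun β => ?_)
    rw [EReal.coe_le_coe_iff]
    have := key β.1
    nlinarith [this]
  refine ⟨fun E₀ hE₀ => ?_, part2⟩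
  -- rewrite the log quotient
  have hlog : ∀ β : ℝ, (∑ x, p x * Real.log (ζ x (β + β₂) / ζ x β₂)) = h (β + β₂) - h β₂ := by
    intro β
    rw [hh, hh, ← Finset.sum_sub_distrib]
    refine Finset.sum_congr rfl fun x _ => ?_
    rw [Real.log_div (hζpos x _).ne' (hζpos x _).ne']; ring
  set c : ℝ := β₂ * E₀ + h β₂ with hc
  -- LHS = Sigbar E₀ + ↑(-c)
  have hmain : (⨅ β : {b : ℝ // 0 ≤ b},
      ((β.1 * E₀ + ∑ x, p x * Real.log (ζ x (β.1 + β₂) / ζ x β₂) : ℝ) : EReal))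
      = Sigbar E₀ + ((-c : ℝ) : EReal) := by
    refine le_antisymm ?_ ?_
    · -- LHS ≤ Sigbar E₀ + (-c), via shift lemma
      have hshift : Sigbar E₀ + ((-c : ℝ) : EReal)
          = ⨅ β : {b : ℝ // 0 ≤ b}, ((β.1 * E₀ + h β.1 + (-c) : ℝ) : EReal) := by
        rw [hSigbar, ← iInf_coe_add_const (fun β : {b : ℝ // 0 ≤ b} => β.1 * E₀ + h β.1) (-c)]
      rw [hshift]
      refine le_iInf fun β => ?_
      rcases le_or_gt β₂ β.1 with hb | hb
      · refine le_trans (iInf_le _ ⟨β.1 - β₂, by linarith⟩) ?_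
        rw [EReal.coe_le_coe_iff, hlog]
        have : β.1 - β₂ + β₂ = β.1 := by ring
        rw [this, hc]; ring_nf; rfl
      · refine le_trans (iInf_le _ (⟨0, le_refl 0⟩ : {b : ℝ // 0 ≤ b})) ?_
        rw [EReal.coe_le_coe_iff, hlog]
        have h1 := key β.1
        have h2 : (β₂ - β.1) * E₀ ≤ (β₂ - β.1) * E₂ :=
          mul_le_mul_of_nonneg_left hE₀ (by linarith)
        have hz : ((⟨0, le_refl 0⟩ : {b : ℝ // 0 ≤ b}) : ℝ) = 0 := rfl
        rw [hz, zero_add, zero_mul, zero_add, hc]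
        nlinarith
    · -- Sigbar E₀ + (-c) ≤ LHS
      refine le_iInf fun β => ?_
      have hv : Sigbar E₀ ≤ ((β.1 + β₂) * E₀ + h (β.1 + β₂) : ℝ) := by
        rw [hSigbar]; exact iInf_le _ (⟨β.1 + β₂, by linarith [β.2]⟩ : {b : ℝ // 0 ≤ b})
      calc Sigbar E₀ + ((-c : ℝ) : EReal)
          ≤ (((β.1 + β₂) * E₀ + h (β.1 + β₂) : ℝ) : EReal) + ((-c : ℝ) : EReal) :=
            add_le_add_left hv _
        _ = ((β.1 * E₀ + ∑ x, p x * Real.log (ζ x (β.1 + β₂) / ζ x β₂) : ℝ) : EReal) := by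
            rw [← EReal.coe_add, EReal.coe_eq_coe_iff, hlog, hc]; ring
  rw [hmain, part2]
  -- now show Sigbar E₀ + (-c) = Sigbar E₀ - r₂ + s
  have hne : Sigbar E₀ ≠ ⊤ := by
    rw [hSigbar]
    exact ne_top_of_le_ne_top (EReal.coe_ne_top _) (iInf_le _ ⟨0, le_refl 0⟩)
  rcases eq_or_ne (Sigbar E₀) ⊥ with hbot | hfin
  · rw [hbot]
    simp
  · rw [← EReal.coe_toReal hne hfin, ← EReal.coe_sub, ← EReal.coe_add, ← EReal.coe_add,
      EReal.coe_eq_coe_iff, hc]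
    ring
end

section
/- Let 𝒳 and 𝒴 be finite nonempty sets, p a probability mass function on 𝒳, and ℰ : 𝒳 × 𝒴 → ℝ. Define ζ_x(β) = Σ_{y∈𝒴} e^{−β ℰ(x,y)}, h(β) = Σ_x p(x) ln ζ_x(β), and Σ̄(E) = inf_{β≥0} [βE + h(β)]. Let E₀ < E₂ be reals and suppose b : [E₀, E₂] → [0, ∞) is a continuous function satisfying h'(b(E)) = −E for every E ∈ [E₀, E₂]. Then Σ̄(E) = b(E)·E + h(b(E)) for every E ∈ [E₀, E₂], the function Σ̄ is differentiable on (E₀, E₂) with derivative Σ̄'(E) = b(E), and Σ̄(E₂) − Σ̄(E₀) − b(E₂)(E₂ − E₀) = ∫_{E₀}^{E₂} ( b(E) − b(E₂) ) dE. -/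
open Finset

private lemma convexOn_log_sum_exp {ι : Type*} [Fintype ι] [Nonempty ι] (c : ι → ℝ) :
    ConvexOn ℝ Set.univ (fun β : ℝ => Real.log (∑ y, Real.exp (β * c y))) := by
  have hpos : ∀ β : ℝ, (0 : ℝ) < ∑ y, Real.exp (β * c y) := fun β =>
    Finset.sum_pos (fun y _ => Real.exp_pos _) Finset.univ_nonempty
  refine ⟨convex_univ, fun u _ v _ s t hs ht hst => ?_⟩
  rcases eq_or_lt_of_le hs with hs0 | hs0
  · simp [← hs0, show t = 1 by linarith]
  rcases eq_or_lt_of_le ht with ht0 | ht0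
  · simp [← ht0, show s = 1 by linarith]
  have hkey : ∑ y, Real.exp ((s * u + t * v) * c y) ≤
      (∑ y, Real.exp (u * c y)) ^ s * (∑ y, Real.exp (v * c y)) ^ t := by
    have hconj : Real.HolderConjugate (1 / s) (1 / t) := by
      refine Real.holderConjugate_iff.mpr ⟨?_, ?_⟩
      · rw [lt_div_iff₀ hs0]; linarith
      · rw [one_div, inv_inv, one_div, inv_inv]; linarith
    have H := Real.inner_le_Lp_mul_Lq_of_nonneg Finset.univ
      (f := fun y => Real.exp (s * (u * c y))) (g := fun y => Real.exp (t * (v * c y)))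
      hconj (fun y _ => (Real.exp_pos _).le) (fun y _ => (Real.exp_pos _).le)
    simp only [← Real.exp_add] at H
    have h1 : ∀ y : ι, s * (u * c y) + t * (v * c y) = (s * u + t * v) * c y := by
      intro y; ring
    simp only [h1] at H
    have h2 : ∀ y : ι, Real.exp (s * (u * c y)) ^ (1/s : ℝ) = Real.exp (u * c y) := by
      intro y; rw [← Real.exp_mul]; congr 1; field_simp
    have h3 : ∀ y : ι, Real.exp (t * (v * c y)) ^ (1/t : ℝ) = Real.exp (v * c y) := by
      intro y; rw [← Real.exp_mul]; congr 1; field_simp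
    simp only [h2, h3, one_div_one_div] at H
    exact H
  calc Real.log (∑ y, Real.exp ((s • u + t • v) * c y))
      ≤ Real.log ((∑ y, Real.exp (u * c y)) ^ s * (∑ y, Real.exp (v * c y)) ^ t) := by
        apply Real.log_le_log (hpos _)
        simpa [smul_eq_mul] using hkey
    _ = s • Real.log (∑ y, Real.exp (u * c y)) + t • Real.log (∑ y, Real.exp (v * c y)) := by
        rw [Real.log_mul (by positivity) (by positivity), Real.log_rpow (hpos _),
          Real.log_rpow (hpos _)]; simp [smul_eq_mul]

private lemma convexOn_finset_sum {ι : Type*} (s : Finset ι) (f : ι → ℝ → ℝ)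
    (hf : ∀ i ∈ s, ConvexOn ℝ Set.univ (f i)) :
    ConvexOn ℝ Set.univ (fun x => ∑ i ∈ s, f i x) := by
  classical
  induction s using Finset.induction_on with
  | empty => simpa using convexOn_const (0 : ℝ) convex_univ
  | insert a s' hi ih =>
    simp only [Finset.sum_insert hi]
    exact (hf a (Finset.mem_insert_self a s')).add
      (ih fun i his => hf i (Finset.mem_insert_of_mem his))

/-- entropy, inverse temperature, and the error-exponent
integral.  With `ζ_x(β) = ∑_y e^{-βℰ(x,y)}`, `h(β) = ∑_x p(x) ln ζ_x(β)` and
`Σ̄(E) = inf_{β≥0}[βE + h(β)]`, if `b : [E₀,E₂] → [0,∞)` is continuous and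
satisfies `h'(b(E)) = -E` on `[E₀,E₂]`, then `Σ̄(E) = b(E)·E + h(b(E))` on
`[E₀,E₂]`, `Σ̄` is differentiable on `(E₀,E₂)` with `Σ̄'(E) = b(E)`, and
`Σ̄(E₂) - Σ̄(E₀) - b(E₂)(E₂-E₀) = ∫_{E₀}^{E₂} (b(E) - b(E₂)) dE`. -/
theorem entropy_heat_capacity_integral
    {𝒳 𝒴 : Type*} [Fintype 𝒳] [Nonempty 𝒳] [Fintype 𝒴] [Nonempty 𝒴]
    (p : 𝒳 → ℝ) (hp : ∀ x, 0 ≤ p x) (hps : ∑ x, p x = 1)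
    (En : 𝒳 → 𝒴 → ℝ)
    (ζ : 𝒳 → ℝ → ℝ)
    (hζ : ∀ x β, ζ x β = ∑ y, Real.exp (-β * En x y))
    (h : ℝ → ℝ) (hh : ∀ β, h β = ∑ x, p x * Real.log (ζ x β))
    (Sigbar : ℝ → ℝ)
    (hSigbar : ∀ e, Sigbar e =
      sInf {z | ∃ β : ℝ, 0 ≤ β ∧ z = β * e + h β})
    (E₀ E₂ : ℝ) (hE : E₀ < E₂)
    (b : ℝ → ℝ) (hbcont : ContinuousOn b (Set.Icc E₀ E₂))
    (hbnonneg : ∀ E ∈ Set.Icc E₀ E₂, 0 ≤ b E)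
    (hbderiv : ∀ E ∈ Set.Icc E₀ E₂, HasDerivAt h (-E) (b E)) :
    (∀ E ∈ Set.Icc E₀ E₂, Sigbar E = b E * E + h (b E)) ∧
    (∀ E ∈ Set.Ioo E₀ E₂, HasDerivAt Sigbar (b E) E) ∧
    Sigbar E₂ - Sigbar E₀ - b E₂ * (E₂ - E₀) = ∫ E in E₀..E₂, (b E - b E₂) := by
  -- positivity of ζ
  have hζpos : ∀ x β, 0 < ζ x β := by
    intro x β
    rw [hζ]
    exact Finset.sum_pos (fun y _ => Real.exp_pos _) Finset.univ_nonempty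
  -- convexity of h
  have hconv : ConvexOn ℝ Set.univ h := by
    have : ConvexOn ℝ Set.univ (fun β => ∑ x, p x * Real.log (ζ x β)) := by
      apply convexOn_finset_sum
      intro x _
      have hx : ConvexOn ℝ Set.univ (fun β : ℝ => Real.log (∑ y, Real.exp (β * (-En x y)))) :=
        convexOn_log_sum_exp (fun y => -En x y)
      have hx' : ConvexOn ℝ Set.univ (fun β : ℝ => Real.log (ζ x β)) := by
        convert hx using 2 with β
        rw [hζ]
        congr 1
        exact Finset.sum_congr rfl fun y _ => by rw [neg_mul, mul_neg]
      have := hx'.smul (hp x)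
      simpa [smul_eq_mul] using this
    have heq : h = fun β => ∑ x, p x * Real.log (ζ x β) := funext hh
    rw [heq]; exact this
  -- key minimality
  have key : ∀ E ∈ Set.Icc E₀ E₂, ∀ β : ℝ, b E * E + h (b E) ≤ β * E + h β := by
    intro E hEm β
    set g : ℝ → ℝ := fun β => β * E + h β with hg
    have hgconv : ConvexOn ℝ Set.univ g := by
      have hlin : ConvexOn ℝ Set.univ (fun β : ℝ => β * E) :=
        ⟨convex_univ, fun u _ v _ s t _ _ _ => le_of_eq (by simp [smul_eq_mul]; ring)⟩
      exact hlin.add hconv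
    have hgd : HasDerivAt g 0 (b E) := by
      have := ((hasDerivAt_id (b E)).mul_const E).add (hbderiv E hEm)
      exact this.congr_deriv (by simp)
    rcases lt_trichotomy β (b E) with hlt | heq | hgt
    · have := hgconv.slope_le_of_hasDerivAt (Set.mem_univ β) (Set.mem_univ (b E)) hlt hgd
      rw [slope_def_field] at this
      simp only [hg] at this
      have hd : 0 < b E - β := by linarith
      rw [div_nonpos_iff] at this
      rcases this with ⟨h1, h2⟩ | ⟨h1, h2⟩
      · linarith
      · linarith
    · rw [heq]
    · have := hgconv.le_slope_of_hasDerivAt (Set.mem_univ (b E)) (Set.mem_univ β) hgt hgd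
      rw [slope_def_field] at this
      simp only [hg] at this
      have hd : 0 < β - b E := by linarith
      rw [le_div_iff₀ hd] at this
      linarith
  -- Sigbar formula
  have hSig_eq : ∀ E ∈ Set.Icc E₀ E₂, Sigbar E = b E * E + h (b E) := by
    intro E hEm
    rw [hSigbar]
    apply le_antisymm
    · have hmem : b E * E + h (b E) ∈ {z | ∃ β : ℝ, 0 ≤ β ∧ z = β * E + h β} := by
        refine Set.mem_setOf.mpr ⟨b E, hbnonneg E hEm, rfl⟩
      refine csInf_le ⟨b E * E + h (b E), fun z hz => ?_⟩ hmem
      obtain ⟨β, _, rfl⟩ := hz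
      exact key E hEm β
    · have hne : Set.Nonempty {z | ∃ β : ℝ, 0 ≤ β ∧ z = β * E + h β} :=
        ⟨b E * E + h (b E), Set.mem_setOf.mpr ⟨b E, hbnonneg E hEm, rfl⟩⟩
      apply le_csInf hne
      rintro z ⟨β, _, rfl⟩
      exact key E hEm β
  -- two-sided bounds
  have two_sided : ∀ E ∈ Set.Icc E₀ E₂, ∀ E' ∈ Set.Icc E₀ E₂,
      b E' * (E' - E) ≤ Sigbar E' - Sigbar E ∧ Sigbar E' - Sigbar E ≤ b E * (E' - E) := by
    intro E hEm E' hEm'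
    have h1 : Sigbar E' ≤ b E * E' + h (b E) := by
      rw [hSig_eq E' hEm']; exact key E' hEm' (b E)
    have h2 : Sigbar E ≤ b E' * E + h (b E') := by
      rw [hSig_eq E hEm]; exact key E hEm (b E')
    rw [hSig_eq E hEm, hSig_eq E' hEm'] at *
    constructor <;> nlinarith
  -- derivative statement
  have hderiv : ∀ E ∈ Set.Ioo E₀ E₂, HasDerivAt Sigbar (b E) E := by
    intro E hEm
    have hEmc : E ∈ Set.Icc E₀ E₂ := Set.mem_Icc_of_Ioo hEm
    have hIccnhds : Set.Icc E₀ E₂ ∈ nhds E := Icc_mem_nhds hEm.1 hEm.2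
    have hbE : ContinuousAt b E := hbcont.continuousAt hIccnhds
    rw [hasDerivAt_iff_tendsto_slope]
    have hsq : ∀ᶠ E' in nhdsWithin E {E}ᶜ, |slope Sigbar E E' - b E| ≤ |b E' - b E| := by
      filter_upwards [self_mem_nhdsWithin,
        nhdsWithin_le_nhds hIccnhds] with E' hne hEm'
      have hne' : E' ≠ E := hne
      obtain ⟨hlo, hhi⟩ := two_sided E hEmc E' hEm'
      have hslope : slope Sigbar E E' = (Sigbar E' - Sigbar E) / (E' - E) :=
        slope_def_field Sigbar E E'
      rcases lt_or_gt_of_ne hne' with hlt | hgt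
      · -- E' < E : dividing by negative flips: b E ≤ slope ≤ b E'
        have hd : E' - E < 0 := by linarith
        have hA : b E ≤ slope Sigbar E E' := by
          rw [hslope, le_div_iff_of_neg hd]; nlinarith
        have hB : slope Sigbar E E' ≤ b E' := by
          rw [hslope, div_le_iff_of_neg hd]; nlinarith
        rw [abs_le]
        constructor
        · have : -|b E' - b E| ≤ 0 := neg_nonpos.2 (abs_nonneg _)
          linarith
        · have : b E' - b E ≤ |b E' - b E| := le_abs_self _
          linarith
      · -- E < E' : b E' ≤ slope ≤ b E
        have hd : 0 < E' - E := by linarith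
        have hA : b E' ≤ slope Sigbar E E' := by
          rw [hslope, le_div_iff₀ hd]; nlinarith
        have hB : slope Sigbar E E' ≤ b E := by
          rw [hslope, div_le_iff₀ hd]; nlinarith
        rw [abs_le]
        constructor
        · have : -(|b E' - b E|) ≤ b E' - b E := neg_abs_le _
          linarith
        · have : (0:ℝ) ≤ |b E' - b E| := abs_nonneg _
          linarith
    have htend0 : Filter.Tendsto (fun E' => |b E' - b E|) (nhdsWithin E {E}ᶜ) (nhds 0) := by
      have : Filter.Tendsto (fun E' => |b E' - b E|) (nhds E) (nhds |b E - b E|) :=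
        ((hbE.tendsto.sub tendsto_const_nhds).abs)
      simpa using this.mono_left nhdsWithin_le_nhds
    have hzero : Filter.Tendsto (fun E' => |slope Sigbar E E' - b E|)
        (nhdsWithin E {E}ᶜ) (nhds 0) :=
      squeeze_zero' (Filter.Eventually.of_forall fun _ => abs_nonneg _) hsq htend0
    rw [tendsto_iff_dist_tendsto_zero]
    simpa [Real.dist_eq] using hzero
  refine ⟨hSig_eq, hderiv, ?_⟩
  -- continuity of h
  have hcont : Continuous h := by
    have heq : h = fun β => ∑ x, p x * Real.log (ζ x β) := funext hh
    rw [heq]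
    apply continuous_finset_sum
    intro x _
    apply continuous_const.mul
    have hζc : Continuous (ζ x) := by
      have : ζ x = fun β => ∑ y, Real.exp (-β * En x y) := funext (hζ x)
      rw [this]
      exact continuous_finset_sum _ fun y _ =>
        (Real.continuous_exp.comp ((continuous_id.neg).mul continuous_const))
    exact hζc.log fun β => (hζpos x β).ne'
  have hSigcont : ContinuousOn Sigbar (Set.Icc E₀ E₂) := by
    have : ContinuousOn (fun E => b E * E + h (b E)) (Set.Icc E₀ E₂) :=
      (hbcont.mul continuousOn_id).add (hcont.comp_continuousOn hbcont)
    exact this.congr hSig_eq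
  have hbint : IntervalIntegrable b MeasureTheory.volume E₀ E₂ :=
    (hbcont.mono (by rw [Set.uIcc_of_le hE.le])).intervalIntegrable
  have hftc : ∫ E in E₀..E₂, b E = Sigbar E₂ - Sigbar E₀ :=
    intervalIntegral.integral_eq_sub_of_hasDerivAt_of_le hE.le hSigcont hderiv hbint
  rw [intervalIntegral.integral_sub hbint intervalIntegrable_const, hftc,
    intervalIntegral.integral_const]
  simp [smul_eq_mul]
  ring
end
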